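/- For n ≥ 0, the generating functions φ*_n(x) = Σ_{k≥0} y*_{1,α}(n,k;λ) x^k satisfy, as formal power series in x, the recursion φ*_{n+1}(x) = (λ/α) · log(1+αx) · Σ_{ℓ=0}^{n} C(n,ℓ) φ*_ℓ(x), where log(1+αx)/α = Σ_{m≥1} (-1)^{m-1} α^{m-1} x^m/m. -/

import Mathlib

open Finset

/-- The degenerate falling factorial `(x)_{n,α} = ∏_{i=0}^{n-1} (x - i·α)`. -/
def degFall {R : Type*} [CommRing R] (α x : R) (n : ℕ) : R :=
  ∏ i ∈ Finset.range n, (x - (i : R) * α)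

/-- The ordinary falling factorial `(x)_n = x(x-1)⋯(x-n+1)`. -/
def fall {R : Type*} [CommRing R] (x : R) (n : ℕ) : R :=
  ∏ i ∈ Finset.range n, (x - (i : R))

/-- Signed Stirling numbers of the first kind, via the standard recurrence. -/
def stirling1 : ℕ → ℕ → ℤ
  | 0, 0 => 1
  | 0, _ + 1 => 0
  | n + 1, 0 => -(n : ℤ) * stirling1 n 0
  | n + 1, k + 1 => stirling1 n k - (n : ℤ) * stirling1 n (k + 1)

/-- The Simsek numbers `y₁(n,k;λ) = (1/k!) Σ_{j=0}^{k} C(k,j) jⁿ λʲ`. -/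
noncomputable def simsek {F : Type*} [Field F] (lam : F) (n k : ℕ) : F :=
  (k.factorial : F)⁻¹ * ∑ j ∈ Finset.range (k + 1),
    (k.choose j : F) * (j : F) ^ n * lam ^ j

/-- The new type degenerate Simsek numbers
`y*₁,α(n,k;λ) = (1/k!) Σ_{ℓ=0}^{k} Σ_{j=0}^{ℓ} C(ℓ,j) α^{k-ℓ} s(k,ℓ) λʲ jⁿ`. -/
noncomputable def ystar {F : Type*} [Field F] (α lam : F) (n k : ℕ) : F :=
  (k.factorial : F)⁻¹ * ∑ ℓ ∈ Finset.range (k + 1), ∑ j ∈ Finset.range (ℓ + 1),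
    (ℓ.choose j : F) * α ^ (k - ℓ) * ((stirling1 k ℓ : ℤ) : F) * lam ^ j * (j : F) ^ n

lemma stirling1_eq_zero : ∀ {n k : ℕ}, n < k → stirling1 n k = 0
  | 0, k + 1, _ => rfl
  | n + 1, k + 1, h => by
      rw [stirling1, stirling1_eq_zero (by omega), stirling1_eq_zero (by omega)]
      ring

lemma stirling1_zero_right : ∀ {n : ℕ}, 0 < n → stirling1 n 0 = 0
  | 1, _ => by simp [stirling1]
  | n + 2, _ => by
      rw [stirling1, stirling1_zero_right (by omega)]; ring

section main
variable {F : Type*} [Field F] [CharZero F] (α lam : F)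

open PowerSeries

/-- scalar coefficient helper -/
noncomputable def acoef (α : F) (k t : ℕ) : F :=
  ((stirling1 k t : ℤ) : F) * α ^ (k - t) / (k.factorial : F)

noncomputable def Aps (α : F) (t : ℕ) : F⟦X⟧ := PowerSeries.mk fun k => acoef α k t

noncomputable def Lc (α : F) (m : ℕ) : F :=
  if m = 0 then (0 : F) else (-1) ^ (m - 1) * α ^ (m - 1) / (m : F)

noncomputable def Lps (α : F) : F⟦X⟧ := PowerSeries.mk (Lc α)

lemma cast1_ne (k : ℕ) : ((k : F) + 1) ≠ 0 := by
  exact_mod_cast Nat.cast_add_one_ne_zero (R := F) k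

lemma cast2_ne (k : ℕ) : ((k : F) + 2) ≠ 0 := by
  have : ((k + 2 : ℕ) : F) ≠ 0 := Nat.cast_ne_zero.mpr (by omega)
  push_cast at this
  exact this

lemma Aps_zero : Aps α 0 = 1 := by
  ext k
  rw [Aps, coeff_mk, acoef]
  cases k with
  | zero => simp [stirling1]
  | succ k => simp [stirling1_zero_right (Nat.succ_pos k)]

lemma one_add_ne : (1 + PowerSeries.C α * X : F⟦X⟧) ≠ 0 := by
  intro h
  have := congrArg (PowerSeries.constantCoeff) h
  simp at this

lemma ode_L : (1 + PowerSeries.C α * X) * d⁄dX F (Lps α) = Aps α 0 := by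
  rw [Aps_zero]
  ext k
  rw [add_mul, one_mul, mul_assoc]
  cases k with
  | zero =>
      rw [map_add, PowerSeries.coeff_C_mul, PowerSeries.coeff_zero_X_mul, mul_zero, add_zero,
        coeff_derivative, Lps, coeff_mk]
      simp [Lc]
  | succ k =>
      rw [map_add, PowerSeries.coeff_C_mul, PowerSeries.coeff_succ_X_mul,
        coeff_derivative, coeff_derivative, Lps, coeff_mk, coeff_mk]
      simp only [Lc, Nat.succ_ne_zero, if_neg, Nat.add_sub_cancel, PowerSeries.coeff_one,
        Nat.succ_ne_zero, if_false]
      have h1 : ((k:F) + 1 + 1) ≠ 0 := by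
        have := cast2_ne (F := F) k
        rwa [show ((k:F) + 2) = (k:F) + 1 + 1 from by ring] at this
      have h2 : ((k:F) + 1) ≠ 0 := cast1_ne k
      push_cast
      field_simp
      ring

lemma ode_A (t : ℕ) :
    (1 + PowerSeries.C α * X) * d⁄dX F (Aps α (t + 1)) = Aps α t := by
  ext k
  rw [add_mul, one_mul]
  cases k with
  | zero =>
      rw [map_add, mul_assoc, PowerSeries.coeff_C_mul, PowerSeries.coeff_zero_X_mul,
        mul_zero, add_zero, coeff_derivative]
      simp only [Aps, coeff_mk, acoef]
      have h1 : (1:ℕ) - (t+1) = 0 := by omega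
      cases t with
      | zero => simp [stirling1, h1]
      | succ t =>
          have h2 : stirling1 0 (t+1) = 0 := stirling1_eq_zero (by omega)
          have h3 : stirling1 1 (t+2) = 0 := stirling1_eq_zero (by omega)
          simp [h2, h3, h1]
  | succ k =>
      rw [map_add, mul_assoc, PowerSeries.coeff_C_mul, PowerSeries.coeff_succ_X_mul,
        coeff_derivative, coeff_derivative]
      simp only [Aps, coeff_mk, acoef]
      have hrec : stirling1 (k+2) (t+1) = stirling1 (k+1) t - (k+1 : ℤ) * stirling1 (k+1) (t+1) := by
        rw [stirling1]; push_cast; ring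
      rw [hrec]
      rcases le_or_gt t k with h | h
      · have e1 : k + 2 - (t+1) = (k + 1 - t) := by omega
        have e2 : k + 1 - (t+1) = k - t := by omega
        have e3 : k + 1 - t = (k - t) + 1 := by omega
        rw [e1, e2, e3]
        have h1 : ((k:F) + 1) ≠ 0 := cast1_ne k
        have h2 : ((k:F) + 2) ≠ 0 := cast2_ne k
        have hf1 : ((k+1).factorial : F) ≠ 0 := Nat.cast_ne_zero.mpr (Nat.factorial_ne_zero _)
        have hf2 : ((k+2).factorial : F) ≠ 0 := Nat.cast_ne_zero.mpr (Nat.factorial_ne_zero _)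
        have hfe1 : ((k+2).factorial : F) = ((k+1).factorial : F) * ((k:F) + 2) := by
          rw [show k + 2 = (k+1) + 1 from rfl, Nat.factorial_succ]; push_cast; ring
        rw [hfe1]
        push_cast
        field_simp
        ring
      · have h1 : stirling1 (k+1) (t+1) = 0 := stirling1_eq_zero (by omega)
        rw [h1]
        have h2 : ((k:F) + 1) ≠ 0 := cast1_ne k
        have h3 : ((k:F) + 2) ≠ 0 := cast2_ne k
        have hfe1 : ((k+2).factorial : F) = ((k+1).factorial : F) * ((k:F) + 2) := by
          rw [show k + 2 = (k+1) + 1 from rfl, Nat.factorial_succ]; push_cast; ring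
        have hf1 : ((k+1).factorial : F) ≠ 0 := Nat.cast_ne_zero.mpr (Nat.factorial_ne_zero _)
        have e1 : k + 2 - (t+1) = k + 1 - t := by omega
        rw [e1, hfe1]
        push_cast
        field_simp
        ring

lemma key (t : ℕ) :
    PowerSeries.C ((t : F) + 1) * Aps α (t + 1) = Lps α * Aps α t := by
  induction t with
  | zero =>
      have h0 : Aps α 0 = 1 := Aps_zero α
      rw [h0, mul_one]
      simp only [Nat.cast_zero, zero_add, map_one, one_mul]
      have hD : d⁄dX F (Aps α 1) = d⁄dX F (Lps α) := by
        apply mul_left_cancel₀ (one_add_ne α)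
        rw [ode_A α 0, ode_L α, Aps_zero]
      apply derivative.ext hD
      simp [Aps, acoef, PowerSeries.constantCoeff_mk, Lps, Lc,
        stirling1_eq_zero (show (0:ℕ) < 1 by omega)]
  | succ t ih =>
      have hD : d⁄dX F (PowerSeries.C ((t:F) + 1 + 1) * Aps α (t + 2)) =
          d⁄dX F (Lps α * Aps α (t + 1)) := by
        apply mul_left_cancel₀ (one_add_ne α)
        rw [Derivation.leibniz, Derivation.leibniz, derivative_C, smul_zero, add_zero,
          smul_eq_mul, smul_eq_mul, smul_eq_mul]
        rw [show (1 + PowerSeries.C α * X) * (PowerSeries.C ((t:F)+1+1) * d⁄dX F (Aps α (t+2)))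
            = PowerSeries.C ((t:F)+1+1) * ((1 + PowerSeries.C α * X) * d⁄dX F (Aps α (t+2)))
            from by ring]
        rw [ode_A α (t+1)]
        rw [mul_add]
        rw [show (1 + PowerSeries.C α * X) * (Aps α (t+1) * d⁄dX F (Lps α))
            = Aps α (t+1) * ((1 + PowerSeries.C α * X) * d⁄dX F (Lps α)) from by ring]
        rw [show (1 + PowerSeries.C α * X) * (Lps α * d⁄dX F (Aps α (t+1)))
            = Lps α * ((1 + PowerSeries.C α * X) * d⁄dX F (Aps α (t+1)))
            from by ring]
        rw [ode_L α, ode_A α t, Aps_zero, mul_one, ← ih,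
          show ((t:F) + 1 + 1) = ((t:F) + 1) + 1 from rfl, map_add, map_one]
        ring
      push_cast
      apply derivative.ext hD
      simp only [map_mul, PowerSeries.constantCoeff_C]
      have h1 : (PowerSeries.constantCoeff) (Aps α (t + 2)) = 0 := by
        simp [Aps, PowerSeries.constantCoeff_mk, acoef,
          stirling1_eq_zero (show 0 < t + 2 by omega)]
      have h2 : (PowerSeries.constantCoeff) (Lps α) = 0 := by
        simp [Lps, PowerSeries.constantCoeff_mk, Lc]
      rw [h1, h2, mul_zero, zero_mul]

/-- Key scalar identity. -/
lemma key_coeff (t k : ℕ) :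
    ((t : F) + 1) * acoef α k (t + 1) =
      ∑ m ∈ range (k + 1), Lc α m * acoef α (k - m) t := by
  have h := congrArg (PowerSeries.coeff k) (key α t)
  rw [PowerSeries.coeff_C_mul, PowerSeries.coeff_mul,
    Finset.Nat.sum_antidiagonal_eq_sum_range_succ_mk] at h
  simpa [Aps, Lps, coeff_mk] using h

end main

section assemble
variable {F : Type*} [Field F] [CharZero F] (α lam : F)

noncomputable def Ssum (lam : F) (n t : ℕ) : F :=
  ∑ j ∈ range (t + 1), (t.choose j : F) * lam ^ j * (j : F) ^ n

lemma ystar_eq (n k : ℕ) :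
    ystar α lam n k = ∑ t ∈ range (k + 1), Ssum lam n t * acoef α k t := by
  rw [ystar, Finset.mul_sum]
  refine Finset.sum_congr rfl fun t _ => ?_
  rw [Ssum, acoef, Finset.mul_sum, Finset.sum_mul]
  refine Finset.sum_congr rfl fun j _ => ?_
  rw [div_eq_mul_inv]
  ring

lemma Ssum_zero (n : ℕ) : Ssum lam (n + 1) 0 = 0 := by
  simp [Ssum]

lemma Ssum_rec (n t : ℕ) :
    Ssum lam (n + 1) (t + 1) =
      lam * ((t : F) + 1) * ∑ i ∈ range (n + 1), (n.choose i : F) * Ssum lam i t := by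
  rw [Ssum, Finset.sum_range_succ']
  have f0 : (((t+1).choose 0 : ℕ) : F) * lam ^ 0 * ((0:ℕ) : F) ^ (n+1) = 0 := by
    simp
  rw [f0, add_zero]
  have step : ∀ j ∈ range (t + 1),
      (((t+1).choose (j+1) : ℕ) : F) * lam ^ (j+1) * (((j+1 : ℕ)) : F) ^ (n+1) =
      ∑ i ∈ range (n + 1),
        lam * ((t : F) + 1) * (n.choose i : F) * ((t.choose j : F) * lam ^ j * (j : F) ^ i) := by
    intro j _
    have hC : (((t+1).choose (j+1) : ℕ) : F) * ((j : F) + 1) = ((t : F) + 1) * (t.choose j : F) := by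
      have := Nat.add_one_mul_choose_eq t j
      have h2 : (((t+1) * t.choose j : ℕ) : F) = (((t+1).choose (j+1) * (j+1) : ℕ) : F) := by
        exact_mod_cast congrArg (Nat.cast (R := F)) this
      push_cast at h2
      linear_combination -h2
    have hpow : (((j+1 : ℕ)) : F) ^ (n+1) = ((j : F) + 1) * ∑ i ∈ range (n+1), (j : F) ^ i * 1 ^ (n - i) * (n.choose i : F) := by
      rw [← add_pow]
      push_cast
      ring
    rw [hpow, Finset.mul_sum, Finset.mul_sum]
    refine Finset.sum_congr rfl fun i _ => ?_
    rw [show (((t+1).choose (j+1) : ℕ) : F) * lam ^ (j+1) * (((j:F)+1) * ((j:F) ^ i * 1 ^ (n-i) * (n.choose i : F)))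
        = ((((t+1).choose (j+1) : ℕ) : F) * ((j:F)+1)) * (lam ^ (j+1) * ((j:F) ^ i * 1 ^ (n-i) * (n.choose i : F))) from by ring,
      hC]
    ring
  rw [Finset.sum_congr rfl step, Finset.mul_sum, Finset.sum_comm]
  refine Finset.sum_congr rfl fun i _ => ?_
  rw [Ssum, Finset.mul_sum, Finset.mul_sum]
  refine Finset.sum_congr rfl fun j _ => ?_
  ring

end assemble

section final
variable {F : Type*} [Field F] [CharZero F] (α lam : F)

lemma acoef_eq_zero {r u : ℕ} (h : r < u) : acoef α r u = 0 := by
  rw [acoef, stirling1_eq_zero h]; simp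

theorem scalar_final (n k : ℕ) :
    ystar α lam (n+1) k =
      lam * ∑ m ∈ range (k+1), Lc α m *
        ∑ ℓ ∈ range (n+1), (n.choose ℓ : F) * ystar α lam ℓ (k - m) := by
  rw [ystar_eq, Finset.sum_range_succ', Ssum_zero, zero_mul, add_zero]
  have lhs2 : ∀ u ∈ range k,
      Ssum lam (n+1) (u+1) * acoef α k (u+1) =
      ∑ i ∈ range (n+1), ∑ m ∈ range (k+1),
        lam * (n.choose i : F) * Ssum lam i u * (Lc α m * acoef α (k-m) u) := by
    intro u _
    rw [Ssum_rec]
    rw [show lam * ((u:F)+1) * (∑ i ∈ range (n+1), (n.choose i:F) * Ssum lam i u) * acoef α k (u+1)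
        = lam * (∑ i ∈ range (n+1), (n.choose i:F) * Ssum lam i u) * (((u:F)+1) * acoef α k (u+1))
        from by ring,
      key_coeff, Finset.mul_sum]
    refine Eq.trans (Finset.sum_congr rfl fun m _ => ?_) Finset.sum_comm
    rw [Finset.mul_sum, Finset.sum_mul]
    exact Finset.sum_congr rfl fun i _ => by ring
  rw [Finset.sum_congr rfl lhs2]
  have hzero : ∀ i ∈ range (n+1), ∑ m ∈ range (k+1),
      lam * (n.choose i : F) * Ssum lam i k * (Lc α m * acoef α (k-m) k) = 0 := by
    intro i _
    refine Finset.sum_eq_zero fun m hm => ?_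
    rcases Nat.eq_zero_or_pos m with h | h
    · subst h; simp [Lc]
    · rw [acoef_eq_zero α (show k - m < k from by simp at hm; omega), mul_zero, mul_zero]
  have hext : (∑ u ∈ range k, ∑ i ∈ range (n+1), ∑ m ∈ range (k+1),
        lam * (n.choose i : F) * Ssum lam i u * (Lc α m * acoef α (k-m) u))
      = ∑ u ∈ range (k+1), ∑ i ∈ range (n+1), ∑ m ∈ range (k+1),
        lam * (n.choose i : F) * Ssum lam i u * (Lc α m * acoef α (k-m) u) := by
    rw [Finset.sum_range_succ, Finset.sum_eq_zero hzero, add_zero]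
  rw [hext]
  have rhs1 : ∀ m ∈ range (k+1),
      Lc α m * ∑ ℓ ∈ range (n+1), (n.choose ℓ:F) * ystar α lam ℓ (k-m)
      = ∑ ℓ ∈ range (n+1), ∑ u ∈ range (k+1),
          Lc α m * ((n.choose ℓ:F) * (Ssum lam ℓ u * acoef α (k-m) u)) := by
    intro m hm
    rw [Finset.mul_sum]
    refine Finset.sum_congr rfl fun ℓ _ => ?_
    rw [ystar_eq]
    have hsub : range (k-m+1) ⊆ range (k+1) := Finset.range_subset_range.mpr (by omega)
    rw [Finset.sum_subset hsub (fun u hu1 hu2 => by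
        rw [acoef_eq_zero α (show k - m < u from by
          simp only [Finset.mem_range] at hu1 hu2; omega), mul_zero])]
    rw [Finset.mul_sum, Finset.mul_sum]
  rw [Finset.sum_congr rfl rhs1]
  calc (∑ u ∈ range (k+1), ∑ i ∈ range (n+1), ∑ m ∈ range (k+1),
        lam * (n.choose i : F) * Ssum lam i u * (Lc α m * acoef α (k-m) u))
      = ∑ i ∈ range (n+1), ∑ u ∈ range (k+1), ∑ m ∈ range (k+1),
        lam * (n.choose i : F) * Ssum lam i u * (Lc α m * acoef α (k-m) u) :=
        Finset.sum_comm
    _ = ∑ i ∈ range (n+1), ∑ m ∈ range (k+1), ∑ u ∈ range (k+1),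
        lam * (n.choose i : F) * Ssum lam i u * (Lc α m * acoef α (k-m) u) :=
        Finset.sum_congr rfl fun i _ => Finset.sum_comm
    _ = ∑ m ∈ range (k+1), ∑ i ∈ range (n+1), ∑ u ∈ range (k+1),
        lam * (n.choose i : F) * Ssum lam i u * (Lc α m * acoef α (k-m) u) :=
        Finset.sum_comm
    _ = lam * ∑ m ∈ range (k+1), ∑ ℓ ∈ range (n+1), ∑ u ∈ range (k+1),
        Lc α m * ((n.choose ℓ:F) * (Ssum lam ℓ u * acoef α (k-m) u)) := by
        rw [Finset.mul_sum]
        refine Finset.sum_congr rfl fun m _ => ?_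
        rw [Finset.mul_sum]
        refine Finset.sum_congr rfl fun i _ => ?_
        rw [Finset.mul_sum]
        refine Finset.sum_congr rfl fun u _ => ?_
        ring

end final

open PowerSeries in
/-- the recursion
`φ*_{n+1}(x) = (λ/α)·log(1+αx) · Σ_{ℓ=0}^{n} C(n,ℓ) φ*_ℓ(x)` as formal power series
in `x`, where `log(1+αx)/α = Σ_{m≥1} (-1)^{m-1} α^{m-1} xᵐ/m`. -/
theorem phiStar_recursion (F : Type*) [Field F] [CharZero F]
    (α lam : F) (n : ℕ) :
    (PowerSeries.mk fun k => ystar α lam (n + 1) k) =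
      C lam *
        (PowerSeries.mk fun m =>
          if m = 0 then (0 : F) else (-1) ^ (m - 1) * α ^ (m - 1) / (m : F)) *
        ∑ ℓ ∈ Finset.range (n + 1),
          C (n.choose ℓ : F) * PowerSeries.mk fun k => ystar α lam ℓ k := by
  have hL : (PowerSeries.mk fun m =>
      if m = 0 then (0 : F) else (-1) ^ (m - 1) * α ^ (m - 1) / (m : F)) = Lps α := rfl
  ext k
  rw [hL, PowerSeries.coeff_mk, mul_assoc, PowerSeries.coeff_C_mul, PowerSeries.coeff_mul,
    Finset.Nat.sum_antidiagonal_eq_sum_range_succ_mk]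
  simp only [Lps, PowerSeries.coeff_mk, map_sum, PowerSeries.coeff_C_mul]
  exact scalar_final α lam n k
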